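/- arXiv:1612.09061 — 12 statements merged into one kernel-verified Lean document; each statement's English description precedes it below -/
import Mathlib

section
/- Let f, g : ℝ → ℝ be smooth functions and let a₁₂, a₂₂ be nonzero reals with the regularity condition a₁₂f'(u) + a₂₂g'(v) ≠ 0 for all u, v. Suppose K₀ ≠ 0 and ω²·f''(u)·g''(v) = K₀·(a₁₂f'(u) + a₂₂g'(v))⁴ for all u, v, where ω ≠ 0. Then a contradiction follows; i.e., there is no translation surface of Type I.3 (both coefficients a₁₂, a₂₂ nonzero) with nonzero constant isotropic Gaussian curvature. -/
/-- No translation surface of Type I.3 (`a₁₂ ≠ 0`, `a₂₂ ≠ 0`) has nonzero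
constant isotropic Gaussian curvature `K₀`. -/
theorem stmt2 (f g : ℝ → ℝ) (a₁₂ a₂₂ ω K₀ : ℝ)
    (hf : ContDiff ℝ (⊤ : ℕ∞) f) (hg : ContDiff ℝ (⊤ : ℕ∞) g)
    (ha₁₂ : a₁₂ ≠ 0) (ha₂₂ : a₂₂ ≠ 0) (hω : ω ≠ 0) (hK₀ : K₀ ≠ 0)
    (hreg : ∀ u v : ℝ, a₁₂ * deriv f u + a₂₂ * deriv g v ≠ 0)
    (hK : ∀ u v : ℝ, ω ^ 2 * deriv (deriv f) u * deriv (deriv g) v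
      = K₀ * (a₁₂ * deriv f u + a₂₂ * deriv g v) ^ 4) :
    False := by
  -- smoothness facts
  have hf' : ContDiff ℝ (⊤ : ℕ∞) f := hf.of_le (by simp)
  have hf1 : ContDiff ℝ (⊤ : ℕ∞) (deriv f) := (contDiff_infty_iff_deriv.mp hf').2
  have hf2 : ContDiff ℝ (⊤ : ℕ∞) (deriv (deriv f)) := (contDiff_infty_iff_deriv.mp hf1).2
  have hdf1 : Differentiable ℝ (deriv f) := hf1.differentiable (by simp)
  have hdf2 : Differentiable ℝ (deriv (deriv f)) := hf2.differentiable (by simp)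
  -- nonvanishing of second derivatives
  have hnz : ∀ u v : ℝ, deriv (deriv f) u ≠ 0 ∧ deriv (deriv g) v ≠ 0 := by
    intro u v
    have h := hK u v
    have hR : K₀ * (a₁₂ * deriv f u + a₂₂ * deriv g v) ^ 4 ≠ 0 :=
      mul_ne_zero hK₀ (pow_ne_zero _ (hreg u v))
    rw [← h] at hR
    constructor
    · intro h0; apply hR; rw [h0]; ring
    · intro h0; apply hR; rw [h0]; ring
  -- differentiate the curvature equation in u
  have key : ∀ u v : ℝ, ω ^ 2 * deriv (deriv (deriv f)) u * deriv (deriv g) v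
      = K₀ * (4 * (a₁₂ * deriv f u + a₂₂ * deriv g v) ^ 3 * (a₁₂ * deriv (deriv f) u)) := by
    intro u v
    have h1 : HasDerivAt (fun u => ω ^ 2 * deriv (deriv f) u * deriv (deriv g) v)
        (ω ^ 2 * deriv (deriv (deriv f)) u * deriv (deriv g) v) u := by
      have := ((hdf2 u).hasDerivAt.const_mul (ω ^ 2)).mul_const (deriv (deriv g) v)
      convert this using 1
    have h2 : HasDerivAt (fun u => K₀ * (a₁₂ * deriv f u + a₂₂ * deriv g v) ^ 4)
        (K₀ * (4 * (a₁₂ * deriv f u + a₂₂ * deriv g v) ^ 3 * (a₁₂ * deriv (deriv f) u))) u := by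
      have hin : HasDerivAt (fun u => a₁₂ * deriv f u + a₂₂ * deriv g v)
          (a₁₂ * deriv (deriv f) u) u :=
        ((hdf1 u).hasDerivAt.const_mul a₁₂).add_const _
      have := (hin.pow 4).const_mul K₀
      exact this.congr_deriv (by norm_num)
    have heq : (fun u => ω ^ 2 * deriv (deriv f) u * deriv (deriv g) v)
        = fun u => K₀ * (a₁₂ * deriv f u + a₂₂ * deriv g v) ^ 4 :=
      funext fun u => hK u v
    rw [heq] at h1
    exact h1.unique h2
  -- h(u,v) * f'''(u) = 4 a₁₂ f''(u)^2
  have sep : ∀ u v : ℝ, deriv (deriv (deriv f)) u * (a₁₂ * deriv f u + a₂₂ * deriv g v)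
      = 4 * a₁₂ * (deriv (deriv f) u) ^ 2 := by
    intro u v
    have h0 := hK u v
    have h1 := key u v
    set h := a₁₂ * deriv f u + a₂₂ * deriv g v with hh
    have hg2 : deriv (deriv g) v ≠ 0 := (hnz u v).2
    -- multiply key by h and substitute K₀ h⁴
    have e1 : ω ^ 2 * deriv (deriv (deriv f)) u * deriv (deriv g) v * h
        = 4 * (a₁₂ * deriv (deriv f) u) * (ω ^ 2 * deriv (deriv f) u * deriv (deriv g) v) := by
      rw [h1, h0]; ring
    have hω2 : ω ^ 2 ≠ 0 := pow_ne_zero _ hω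
    field_simp at e1
    have : ω ^ 2 * deriv (deriv g) v * (deriv (deriv (deriv f)) u * h
        - 4 * a₁₂ * (deriv (deriv f) u) ^ 2) = 0 := by rw [e1]; ring; 
    have := mul_eq_zero.mp this
    rcases this with h' | h'
    · exact absurd h' (mul_ne_zero hω2 hg2)
    · linarith
  -- f'''(0) ≠ 0
  have hf30 : deriv (deriv (deriv f)) 0 ≠ 0 := by
    intro h0
    have := sep 0 0
    rw [h0] at this
    have hf20 := (hnz 0 0).1
    have : (4:ℝ) * a₁₂ * (deriv (deriv f) 0) ^ 2 = 0 := by linarith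
    exact (mul_ne_zero (mul_ne_zero (by norm_num) ha₁₂)
      (pow_ne_zero _ hf20)) this
  -- deriv g is constant
  have hgconst : ∀ v : ℝ, deriv g v = deriv g 0 := by
    intro v
    have h1 := sep 0 v
    have h2 := sep 0 0
    have : deriv (deriv (deriv f)) 0 * (a₂₂ * (deriv g v - deriv g 0)) = 0 := by ring_nf; nlinarith [h1, h2]
    rcases mul_eq_zero.mp this with h' | h'
    · exact absurd h' hf30
    · rcases mul_eq_zero.mp h' with h'' | h''
      · exact absurd h'' ha₂₂
      · linarith
  -- hence deriv (deriv g) = 0, contradiction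
  have : deriv g = fun _ => deriv g 0 := funext hgconst
  have hz : deriv (deriv g) 0 = 0 := by rw [this]; simp
  exact (hnz 0 0).2 hz
end

section
/- Let c, a₂₂, ω be nonzero reals and define f(u) = (1/(cω²))·log|cos(ωca₂₂u)| on an interval where cos(ωca₂₂u) ≠ 0. Then −f''(u)/(a₂₂² + (ωf'(u))²) = c for all u in that interval. -/
/-! With `a = ωca₂₂` the function is `f = log |cos (a u)| / (cω²)`, so `f' = -(a₂₂/ω) tan (a u)` and
`f'' = -c a₂₂² sec² (a u)`, while `a₂₂² + (ω f')² = a₂₂² (1 + tan² (a u)) = a₂₂² sec² (a u)`. -/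

open Real Topology

namespace Real

theorem hasDerivAt_log_abs_cos_mul (a u : ℝ) (hu : cos (a * u) ≠ 0) :
    HasDerivAt (fun x => log |cos (a * x)|) (-a * tan (a * u)) u := by
  have hcos : HasDerivAt (fun x => cos (a * x)) (-sin (a * u) * a) u := by
    simpa using ((hasDerivAt_id u).const_mul a).cos
  simp only [log_abs]
  convert hcos.log hu using 1
  rw [tan_eq_sin_div_cos]
  ring

theorem hasDerivAt_tan_mul (a u : ℝ) (hu : cos (a * u) ≠ 0) :
    HasDerivAt (fun x => tan (a * x)) (a / cos (a * u) ^ 2) u :=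
  ((hasDerivAt_tan hu).comp u ((hasDerivAt_id u).const_mul a)).congr_deriv (by ring)

theorem deriv_log_abs_cos_mul (a : ℝ) {u : ℝ} (hu : cos (a * u) ≠ 0) :
    deriv (fun x => log |cos (a * x)|) u = -a * tan (a * u) :=
  (hasDerivAt_log_abs_cos_mul a u hu).deriv

theorem deriv_deriv_log_abs_cos_mul (a : ℝ) {u : ℝ} (hu : cos (a * u) ≠ 0) :
    deriv (deriv fun x => log |cos (a * x)|) u = -a ^ 2 / cos (a * u) ^ 2 := by
  have hopen : IsOpen {x : ℝ | cos (a * x) ≠ 0} :=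
    isOpen_ne_fun (by fun_prop) continuous_const
  have hderiv : (deriv fun x => log |cos (a * x)|) =ᶠ[𝓝 u] fun x => -a * tan (a * x) := by
    filter_upwards [hopen.mem_nhds hu] with x hx
    exact deriv_log_abs_cos_mul a hx
  rw [hderiv.deriv_eq, ((hasDerivAt_tan_mul a u hu).const_mul (-a)).deriv]
  ring

end Real

/-- The Scherk-type function `f(u) = (1/(cω²))·log|cos(ωca₂₂u)|` satisfies
`−f''/(a₂₂² + (ωf')²) = c` wherever the cosine does not vanish. -/
theorem stmt4 (c a₂₂ ω : ℝ) (hc : c ≠ 0) (ha₂₂ : a₂₂ ≠ 0) (hω : ω ≠ 0)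
    (f : ℝ → ℝ)
    (hfdef : f = fun u => (1 / (c * ω ^ 2)) * Real.log |Real.cos (ω * c * a₂₂ * u)|) :
    ∀ u : ℝ, Real.cos (ω * c * a₂₂ * u) ≠ 0 →
      -(deriv (deriv f) u) / (a₂₂ ^ 2 + (ω * deriv f u) ^ 2) = c := by
  intro u hu
  have hf' : deriv f u = 1 / (c * ω ^ 2) * (-(ω * c * a₂₂) * tan (ω * c * a₂₂ * u)) := by
    rw [hfdef, deriv_const_mul_field']
    exact congrArg _ (deriv_log_abs_cos_mul _ hu)
  have hf'' : deriv (deriv f) u =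
      1 / (c * ω ^ 2) * (-(ω * c * a₂₂) ^ 2 / cos (ω * c * a₂₂ * u) ^ 2) := by
    rw [hfdef, deriv_const_mul_field', deriv_const_mul_field']
    exact congrArg _ (deriv_deriv_log_abs_cos_mul _ hu)
  have hsec := one_add_tan_sq_mul_cos_sq_eq_one hu
  rw [hf', hf'', div_eq_iff (by positivity)]
  generalize tan (ω * c * a₂₂ * u) = t at hsec ⊢
  generalize cos (ω * c * a₂₂ * u) = C at hsec hu ⊢
  field_simp
  linear_combination -hsec
end

section
/- Let a₁₂, a₂₂, c₁, ω, H₀ be reals with a₁₂a₂₂ ≠ 0, ω ≠ 0, H₀ ≠ 0. Define g(v) = ((a₂₂² + (ωc₁)²)/(2H₀a₂₂²))·(4H₀a₂₂v/(a₂₂² + (ωc₁)²) + d₄)^{1/2} − (a₁₂c₁/a₂₂)v + d₅ on an interval where the radicand is positive. Then g satisfies g''(v)/(a₁₂c₁ + a₂₂g'(v))³ = −2H₀/(a₂₂² + (ωc₁)²). -/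
/-!
Writing `E = a₂₂² + (ωc₁)²`, the function is `g v = A √(k v + d₄) − m v + d₅` with `A = E/(2H₀a₂₂²)`,
`k = 4H₀a₂₂/E`, `m = a₁₂c₁/a₂₂`. Then `g' = Ak/(2√(kv+d₄)) − m` and `g'' = −Ak²/(4√(kv+d₄)³)`;
since `a₂₂m = a₁₂c₁`, the denominator is `(a₂₂Ak/(2√(kv+d₄)))³`, the square roots cancel, and
the quotient is the constant `−2/(a₂₂³A²k) = −2H₀/E`.
-/

open Filter Topology

section SqrtAffine

variable {A k d m c v : ℝ}

theorem hasDerivAt_sqrt_affine (hv : 0 < k * v + d) :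
    HasDerivAt (fun w => √(k * w + d)) (k / (2 * √(k * v + d))) v :=
  ((hasDerivAt_const_mul k).add_const d).sqrt hv.ne'

theorem hasDerivAt_sqrt_affine_sub_linear (hv : 0 < k * v + d) :
    HasDerivAt (fun w => A * √(k * w + d) - m * w + c)
      (A * k / (2 * √(k * v + d)) - m) v :=
  ((((hasDerivAt_sqrt_affine hv).const_mul A).sub (hasDerivAt_const_mul m)).add_const
    c).congr_deriv (by ring)

theorem deriv_deriv_sqrt_affine_sub_linear (hv : 0 < k * v + d) :
    deriv (deriv fun w => A * √(k * w + d) - m * w + c) v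
      = -(A * k ^ 2) / (4 * √(k * v + d) ^ 3) := by
  have hpos : ∀ᶠ w in 𝓝 v, 0 < k * w + d :=
    continuousAt_const.eventually_lt (by fun_prop : Continuous fun w => k * w + d).continuousAt hv
  have hderiv : deriv (fun w => A * √(k * w + d) - m * w + c)
      =ᶠ[𝓝 v] fun w => A * k / 2 * (√(k * w + d))⁻¹ - m := by
    filter_upwards [hpos] with w hw
    rw [(hasDerivAt_sqrt_affine_sub_linear hw).deriv]
    ring
  have hs : √(k * v + d) ≠ 0 := (Real.sqrt_pos.mpr hv).ne'
  rw [hderiv.deriv_eq,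
    ((((hasDerivAt_sqrt_affine hv).fun_inv hs).const_mul (A * k / 2)).sub_const m).deriv]
  field_simp
  ring

end SqrtAffine

theorem stmt7_general (a₁₂ a₂₂ c₁ ω H₀ d₄ d₅ : ℝ)
    (ha : a₁₂ * a₂₂ ≠ 0) (hH₀ : H₀ ≠ 0)
    (g : ℝ → ℝ)
    (hgdef : g = fun v => (a₂₂ ^ 2 + (ω * c₁) ^ 2) / (2 * H₀ * a₂₂ ^ 2)
      * Real.sqrt (4 * H₀ * a₂₂ * v / (a₂₂ ^ 2 + (ω * c₁) ^ 2) + d₄)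
      - (a₁₂ * c₁ / a₂₂) * v + d₅) :
    ∀ v : ℝ, 0 < 4 * H₀ * a₂₂ * v / (a₂₂ ^ 2 + (ω * c₁) ^ 2) + d₄ →
      deriv (deriv g) v / (a₁₂ * c₁ + a₂₂ * deriv g v) ^ 3
        = -(2 * H₀) / (a₂₂ ^ 2 + (ω * c₁) ^ 2) := by
  intro v hv
  have ha₂₂ : a₂₂ ≠ 0 := right_ne_zero_of_mul ha
  set E := a₂₂ ^ 2 + (ω * c₁) ^ 2
  have hE : E ≠ 0 := by positivity
  simp only [fun w => mul_div_right_comm (4 * H₀ * a₂₂) w E] at hgdef hv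
  have hs : √(4 * H₀ * a₂₂ / E * v + d₄) ≠ 0 := (Real.sqrt_pos.mpr hv).ne'
  rw [hgdef, deriv_deriv_sqrt_affine_sub_linear hv, (hasDerivAt_sqrt_affine_sub_linear hv).deriv]
  generalize √(4 * H₀ * a₂₂ / E * v + d₄) = s at hs ⊢
  field_simp
  ring

/-- Case (b) of the CIMC classification (`f` linear, `a₂₂ ≠ 0`): the explicit
square-root function `g` solves `g''/(a₁₂c₁ + a₂₂g')³ = −2H₀/(a₂₂² + (ωc₁)²)`
where the radicand is positive. -/
theorem stmt7 (a₁₂ a₂₂ c₁ ω H₀ d₄ d₅ : ℝ)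
    (ha : a₁₂ * a₂₂ ≠ 0) (hω : ω ≠ 0) (hH₀ : H₀ ≠ 0)
    (g : ℝ → ℝ)
    (hgdef : g = fun v => (a₂₂ ^ 2 + (ω * c₁) ^ 2) / (2 * H₀ * a₂₂ ^ 2)
      * Real.sqrt (4 * H₀ * a₂₂ * v / (a₂₂ ^ 2 + (ω * c₁) ^ 2) + d₄)
      - (a₁₂ * c₁ / a₂₂) * v + d₅) :
    ∀ v : ℝ, 0 < 4 * H₀ * a₂₂ * v / (a₂₂ ^ 2 + (ω * c₁) ^ 2) + d₄ →
      deriv (deriv g) v / (a₁₂ * c₁ + a₂₂ * deriv g v) ^ 3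
        = -(2 * H₀) / (a₂₂ ^ 2 + (ω * c₁) ^ 2) :=
  stmt7_general a₁₂ a₂₂ c₁ ω H₀ d₄ d₅ ha hH₀ g hgdef
end

section
/- Let f, g, h : ℝ → ℝ be smooth, a ∈ ℝ, with g'(y) − a ≠ 0 and g''(y)·h'''(y) − g'''(y)·h''(y) ≠ 0 for all y (β is a space curve). If f''(x)·[h''(y)(g'(y) − a) − g''(y)(h'(y) − f'(x))] = 0 for all x, y (isotropic Gaussian curvature vanishes), then f'' ≡ 0. -/
private lemma smooth_deriv_aux {f : ℝ → ℝ} (hf : ContDiff ℝ (⊤ : ℕ∞) f) (n : ℕ) :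
    ContDiff ℝ ((⊤ : ℕ∞) : WithTop ℕ∞) (deriv^[n] f) :=
  ContDiff.iterate_deriv n (hf.of_le (by simp))

/-- Type II translation surface with vanishing isotropic Gaussian curvature:
if `f''·[h''(g'−a) − g''(h'−f')] = 0` everywhere and `β` is a space curve,
then `f'' ≡ 0`. -/
theorem stmt8 (f g h : ℝ → ℝ) (a : ℝ)
    (hf : ContDiff ℝ (⊤ : ℕ∞) f) (hg : ContDiff ℝ (⊤ : ℕ∞) g) (hh : ContDiff ℝ (⊤ : ℕ∞) h)
    (hreg : ∀ y : ℝ, deriv g y - a ≠ 0)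
    (htor : ∀ y : ℝ, deriv (deriv g) y * deriv (deriv (deriv h)) y
      - deriv (deriv (deriv g)) y * deriv (deriv h) y ≠ 0)
    (hK : ∀ x y : ℝ, deriv (deriv f) x *
      (deriv (deriv h) y * (deriv g y - a)
        - deriv (deriv g) y * (deriv h y - deriv f x)) = 0) :
    ∀ x : ℝ, deriv (deriv f) x = 0 := by
  by_contra hcon
  push_neg at hcon
  obtain ⟨x₀, hx₀⟩ := hcon
  set c := deriv f x₀ with hc
  -- the bracket vanishes for all y
  have hF : ∀ y, deriv (deriv h) y * (deriv g y - a)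
      - deriv (deriv g) y * (deriv h y - c) = 0 := by
    intro y
    have := hK x₀ y
    rcases mul_eq_zero.mp this with h1 | h1
    · exact absurd h1 hx₀
    · exact h1
  -- differentiability facts
  have hg1 : Differentiable ℝ (deriv g) := by
    have := smooth_deriv_aux hg 1; simpa using this.differentiable (by simp)
  have hg2 : Differentiable ℝ (deriv (deriv g)) := by
    have := smooth_deriv_aux hg 2; simpa [Function.iterate_succ', Function.comp] using
      this.differentiable (by simp)
  have hh1 : Differentiable ℝ (deriv h) := by
    have := smooth_deriv_aux hh 1; simpa using this.differentiable (by simp)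
  have hh2 : Differentiable ℝ (deriv (deriv h)) := by
    have := smooth_deriv_aux hh 2; simpa [Function.iterate_succ', Function.comp] using
      this.differentiable (by simp)
  -- derivative of the bracket is zero
  have hF' : ∀ y, deriv (deriv (deriv h)) y * (deriv g y - a)
      + deriv (deriv h) y * deriv (deriv g) y
      - (deriv (deriv (deriv g)) y * (deriv h y - c)
        + deriv (deriv g) y * deriv (deriv h) y) = 0 := by
    intro y
    have hzero : (fun y => deriv (deriv h) y * (deriv g y - a)
        - deriv (deriv g) y * (deriv h y - c)) = fun _ => (0 : ℝ) :=
      funext hF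
    have : deriv (fun y => deriv (deriv h) y * (deriv g y - a)
        - deriv (deriv g) y * (deriv h y - c)) y = 0 := by
      rw [hzero]; simp
    rw [deriv_fun_sub ((hh2.differentiableAt.fun_mul ((hg1.sub_const a).differentiableAt))
        : DifferentiableAt ℝ _ y)
        ((hg2.differentiableAt.fun_mul ((hh1.sub_const c).differentiableAt))
        : DifferentiableAt ℝ _ y),
      deriv_fun_mul hh2.differentiableAt (hg1.sub_const a).differentiableAt,
      deriv_fun_mul hg2.differentiableAt (hh1.sub_const c).differentiableAt] at this
    simpa [deriv_sub_const] using this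
  -- deduce h' ≡ c
  have hconst : ∀ y, deriv h y = c := by
    intro y
    have e1 := hF y
    have e2 := hF' y
    -- e2 simplifies to h'''(g'-a) = g'''(h'-c)
    have e2' : deriv (deriv (deriv h)) y * (deriv g y - a)
        = deriv (deriv (deriv g)) y * (deriv h y - c) := by linarith
    have e1' : deriv (deriv h) y * (deriv g y - a)
        = deriv (deriv g) y * (deriv h y - c) := by linarith
    have key : (deriv g y - a) * (deriv h y - c) *
        (deriv (deriv g) y * deriv (deriv (deriv h)) y
          - deriv (deriv (deriv g)) y * deriv (deriv h) y) = 0 := by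
      linear_combination (deriv h y - c) * deriv (deriv g) y * e2'
        - (deriv h y - c) * deriv (deriv (deriv g)) y * e1'
    rcases mul_eq_zero.mp key with hk | hk
    · rcases mul_eq_zero.mp hk with hk' | hk'
      · exact absurd hk' (hreg y)
      · linarith
    · exact absurd hk (htor y)
  -- then h'' ≡ 0 and h''' ≡ 0, contradicting torsion
  have hdh : deriv h = fun _ => c := funext hconst
  have hdd : deriv (deriv h) = fun _ => (0 : ℝ) := by
    rw [hdh]; funext y; simp
  have hddd : deriv (deriv (deriv h)) = fun _ => (0 : ℝ) := by
    rw [hdd]; funext y; simp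
  have := htor 0
  rw [hddd, hdd] at this
  simp at this
end

section
/- Let f, g, h : ℝ → ℝ be smooth, a ∈ ℝ, K₀ ∈ ℝ nonzero, with g'(y) − a ≠ 0 and g''h''' − g'''h'' ≠ 0 everywhere. Then the equation f''(x)·[h''(y)(g'(y) − a) − g''(y)(h'(y) − f'(x))] = K₀·(g'(y) − a)³ for all x, y has no solution. In other words, no translation surface of Type II has nonzero constant isotropic Gaussian curvature. -/
/-- No Type II translation surface has nonzero constant isotropic Gaussian
curvature `K₀`. -/
theorem stmt9 (f g h : ℝ → ℝ) (a K₀ : ℝ)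
    (hf : ContDiff ℝ (⊤ : ℕ∞) f) (hg : ContDiff ℝ (⊤ : ℕ∞) g) (hh : ContDiff ℝ (⊤ : ℕ∞) h)
    (hK₀ : K₀ ≠ 0)
    (hreg : ∀ y : ℝ, deriv g y - a ≠ 0)
    (htor : ∀ y : ℝ, deriv (deriv g) y * deriv (deriv (deriv h)) y
      - deriv (deriv (deriv g)) y * deriv (deriv h) y ≠ 0)
    (hK : ∀ x y : ℝ, deriv (deriv f) x *
      (deriv (deriv h) y * (deriv g y - a)
        - deriv (deriv g) y * (deriv h y - deriv f x))
      = K₀ * (deriv g y - a) ^ 3) :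
    False := by
  have h1le : (1 : WithTop ℕ∞) ≤ ((⊤ : ℕ∞) : WithTop ℕ∞) := by
    exact_mod_cast le_top
  -- smoothness of the various derivatives
  have hf1 : ContDiff ℝ (⊤ : ℕ∞) (deriv f) :=
    (contDiff_infty_iff_deriv.mp (hf.of_le (by simp))).2
  have hg1 : ContDiff ℝ (⊤ : ℕ∞) (deriv g) :=
    (contDiff_infty_iff_deriv.mp (hg.of_le (by simp))).2
  have hh1 : ContDiff ℝ (⊤ : ℕ∞) (deriv h) :=
    (contDiff_infty_iff_deriv.mp (hh.of_le (by simp))).2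
  have hh2 : ContDiff ℝ (⊤ : ℕ∞) (deriv (deriv h)) :=
    (contDiff_infty_iff_deriv.mp hh1).2
  -- C y ≠ 0
  have hC : ∀ y : ℝ, K₀ * (deriv g y - a) ^ 3 ≠ 0 := fun y =>
    mul_ne_zero hK₀ (pow_ne_zero _ (hreg y))
  -- f'' never vanishes
  have hne : ∀ x, deriv (deriv f) x ≠ 0 := by
    intro x hx
    have := hK x 0
    rw [hx, zero_mul] at this
    exact hC 0 this.symm
  -- f' 0 ≠ f' 1 by MVT
  have hu : deriv f 0 ≠ deriv f 1 := by
    intro hyp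
    obtain ⟨c, _, hc⟩ := exists_deriv_eq_slope (deriv f) (by norm_num : (0:ℝ) < 1)
      (hf1.continuous.continuousOn) ((hf1.differentiable (by simp)).differentiableOn)
    rw [hyp] at hc
    simp at hc
    exact hne c hc
  set u₁ := deriv f 0 with hu₁
  set u₂ := deriv f 1 with hu₂
  set v₁ := deriv (deriv f) 0 with hv₁
  set v₂ := deriv (deriv f) 1 with hv₂
  have hv₁0 : v₁ ≠ 0 := hne 0
  have hv₂0 : v₂ ≠ 0 := hne 1
  have hu12 : u₁ - u₂ ≠ 0 := sub_ne_zero.mpr hu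
  set μ := (1/v₁ - 1/v₂)/(u₁ - u₂) with hμ
  set L := 1/v₁ - u₁ * μ with hL
  have hvL : v₁ * L = 1 - u₁ * v₁ * μ := by
    rw [hL]
    field_simp
  -- pointwise identities for g'' and h''·(g'−a)
  have hQ : ∀ y, deriv (deriv g) y = μ * (K₀ * (deriv g y - a) ^ 3) := by
    intro y
    have e1 := hK 0 y
    have e2 := hK 1 y
    rw [← hu₁, ← hv₁] at e1
    rw [← hu₂, ← hv₂] at e2
    rw [hμ]
    field_simp
    linear_combination v₂ * e1 - v₁ * e2
  have hW : ∀ y, deriv (deriv h) y * (deriv g y - a)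
      = (K₀ * (deriv g y - a) ^ 3) * (L + μ * deriv h y) := by
    intro y
    have e1 := hK 0 y
    rw [← hu₁, ← hv₁] at e1
    have hq := hQ y
    have key : v₁ * (deriv (deriv h) y * (deriv g y - a))
        = v₁ * ((K₀ * (deriv g y - a) ^ 3) * (L + μ * deriv h y)) := by
      linear_combination e1 + (v₁ * deriv h y - v₁ * u₁) * hq
        - (K₀ * (deriv g y - a) ^ 3) * hvL
    exact mul_left_cancel₀ hv₁0 key
  -- differentiate the g'' identity
  have hGfun : deriv (deriv g) = fun y => μ * (K₀ * (deriv g y - a) ^ 3) := funext hQ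
  have hG3 : ∀ y, deriv (deriv (deriv g)) y
      = μ * (K₀ * (3 * (deriv g y - a) ^ 2 * deriv (deriv g) y)) := by
    intro y
    conv_lhs => rw [hGfun]
    have hd : HasDerivAt (fun y => deriv g y - a) (deriv (deriv g) y) y :=
      ((hg1.differentiable (by simp) y).hasDerivAt).sub_const a
    rw [(((hd.fun_pow 3).const_mul K₀).const_mul μ).deriv]
    push_cast
    ring
  -- differentiate the h'' identity
  have hH3 : ∀ y, deriv (deriv (deriv h)) y * (deriv g y - a)
      + deriv (deriv h) y * deriv (deriv g) y
      = K₀ * (3 * (deriv g y - a) ^ 2 * deriv (deriv g) y) * (L + μ * deriv h y)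
        + (K₀ * (deriv g y - a) ^ 3) * (μ * deriv (deriv h) y) := by
    intro y
    have hWfun : (fun y => deriv (deriv h) y * (deriv g y - a))
        = fun y => (K₀ * (deriv g y - a) ^ 3) * (L + μ * deriv h y) := funext hW
    have hdg : HasDerivAt (fun y => deriv g y - a) (deriv (deriv g) y) y :=
      ((hg1.differentiable (by simp) y).hasDerivAt).sub_const a
    have hdh2 : HasDerivAt (deriv (deriv h)) (deriv (deriv (deriv h)) y) y :=
      (hh2.differentiable (by simp) y).hasDerivAt
    have hdh1 : HasDerivAt (fun y => L + μ * deriv h y) (μ * deriv (deriv h) y) y :=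
      (((hh1.differentiable (by simp) y).hasDerivAt).const_mul μ).const_add L
    have hlhs : HasDerivAt (fun y => deriv (deriv h) y * (deriv g y - a))
        (deriv (deriv (deriv h)) y * (deriv g y - a)
          + deriv (deriv h) y * deriv (deriv g) y) y := hdh2.mul hdg
    have hrhs := ((hdg.fun_pow 3).const_mul K₀).fun_mul hdh1
    have e1 := hlhs.deriv
    rw [hWfun] at e1
    rw [← e1, hrhs.deriv]
    push_cast
    ring
  -- derive contradiction from the torsion at y = 0
  have hs0 : deriv g 0 - a ≠ 0 := hreg 0
  have eG2 : deriv (deriv g) 0 = μ * (K₀ * (deriv g 0 - a) ^ 3) := hQ 0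
  have eH2 : deriv (deriv h) 0
      = K₀ * (deriv g 0 - a) ^ 2 * (L + μ * deriv h 0) := by
    have e := hW 0
    have h2 : deriv (deriv h) 0 * (deriv g 0 - a)
        = (K₀ * (deriv g 0 - a) ^ 2 * (L + μ * deriv h 0)) * (deriv g 0 - a) := by
      rw [e]; ring
    exact mul_right_cancel₀ hs0 h2
  have eG3 : deriv (deriv (deriv g)) 0
      = μ * (K₀ * (3 * (deriv g 0 - a) ^ 2 * (μ * (K₀ * (deriv g 0 - a) ^ 3)))) := by
    rw [hG3 0, eG2]
  have eH3 : deriv (deriv (deriv h)) 0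
      = 3 * μ * K₀ ^ 2 * (deriv g 0 - a) ^ 4 * (L + μ * deriv h 0) := by
    have e := hH3 0
    rw [eG2, eH2] at e
    have h2 : deriv (deriv (deriv h)) 0 * (deriv g 0 - a)
        = (3 * μ * K₀ ^ 2 * (deriv g 0 - a) ^ 4 * (L + μ * deriv h 0))
          * (deriv g 0 - a) := by
      linear_combination e
    exact mul_right_cancel₀ hs0 h2
  apply htor 0
  rw [eG2, eG3, eH2, eH3]
  ring
end

section
/- Let f, g, h : ℝ → ℝ be smooth, a ∈ ℝ, with g'(y) − a ≠ 0 and g''h''' − g'''h'' ≠ 0 everywhere (nonzero torsion). Then the isotropic minimality equation [1 + (g'(y))²](g'(y) − a)·f''(x) + (1 + a²)·[h''(y)(g'(y) − a) − g''(y)(h'(y) − f'(x))] = 0 for all x, y has no solution. That is, no translation surface of Type II is isotropic minimal. -/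
/-- Key lemma: if `c * (h''(g'-a)) = g''(c h' - d)` identically with `c ≠ 0`,
then the torsion vanishes somewhere, a contradiction. -/
theorem key_lemma (g h : ℝ → ℝ) (a c d : ℝ) (hc : c ≠ 0)
    (hg : ContDiff ℝ (⊤ : ℕ∞) g) (hh : ContDiff ℝ (⊤ : ℕ∞) h)
    (hreg : ∀ y : ℝ, deriv g y - a ≠ 0)
    (htor : ∀ y : ℝ, deriv (deriv g) y * deriv (deriv (deriv h)) y
      - deriv (deriv (deriv g)) y * deriv (deriv h) y ≠ 0)
    (heq : ∀ y : ℝ, c * (deriv (deriv h) y * (deriv g y - a))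
      = deriv (deriv g) y * (c * deriv h y - d)) : False := by
  have hg' : ContDiff ℝ (⊤ : ℕ∞) g := hg.of_le (by simp)
  have hh' : ContDiff ℝ (⊤ : ℕ∞) h := hh.of_le (by simp)
  have hg1 : ContDiff ℝ (⊤ : ℕ∞) (deriv g) := (contDiff_infty_iff_deriv.mp hg').2
  have hg2 : ContDiff ℝ (⊤ : ℕ∞) (deriv (deriv g)) := (contDiff_infty_iff_deriv.mp hg1).2
  have hh1 : ContDiff ℝ (⊤ : ℕ∞) (deriv h) := (contDiff_infty_iff_deriv.mp hh').2
  have hh2 : ContDiff ℝ (⊤ : ℕ∞) (deriv (deriv h)) := (contDiff_infty_iff_deriv.mp hh1).2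
  have dg1 : Differentiable ℝ (deriv g) := hg1.differentiable (by simp)
  have dg2 : Differentiable ℝ (deriv (deriv g)) := hg2.differentiable (by simp)
  have dh1 : Differentiable ℝ (deriv h) := hh1.differentiable (by simp)
  have dh2 : Differentiable ℝ (deriv (deriv h)) := hh2.differentiable (by simp)
  have e2 : ∀ y : ℝ, c * (deriv (deriv (deriv h)) y * (deriv g y - a))
      = deriv (deriv (deriv g)) y * (c * deriv h y - d) := by
    intro y
    have hF : HasDerivAt
        (fun z => c * (deriv (deriv h) z * (deriv g z - a))
          - deriv (deriv g) z * (c * deriv h z - d))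
        (c * (deriv (deriv (deriv h)) y * (deriv g y - a)
            + deriv (deriv h) y * deriv (deriv g) y)
          - (deriv (deriv (deriv g)) y * (c * deriv h y - d)
            + deriv (deriv g) y * (c * deriv (deriv h) y))) y := by
      exact (((dh2 y).hasDerivAt.mul ((dg1 y).hasDerivAt.sub_const a)).const_mul c).sub
        ((dg2 y).hasDerivAt.mul (((dh1 y).hasDerivAt.const_mul c).sub_const d))
    have hF0 : (fun z => c * (deriv (deriv h) z * (deriv g z - a))
        - deriv (deriv g) z * (c * deriv h z - d)) = fun _ => (0 : ℝ) :=
      funext fun z => sub_eq_zero.mpr (heq z)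
    rw [hF0] at hF
    have huniq := hF.unique (hasDerivAt_const y 0)
    linear_combination huniq
  have hzero : (deriv (deriv g) 0 * deriv (deriv (deriv h)) 0
      - deriv (deriv (deriv g)) 0 * deriv (deriv h) 0) * ((deriv g 0 - a) * c) = 0 := by
    linear_combination deriv (deriv g) 0 * e2 0 - deriv (deriv (deriv g)) 0 * heq 0
  exact htor 0 ((mul_eq_zero.mp hzero).resolve_right (mul_ne_zero (hreg 0) hc))

/-- No Type II translation surface is isotropic minimal. -/
theorem stmt10 (f g h : ℝ → ℝ) (a : ℝ)
    (hf : ContDiff ℝ (⊤ : ℕ∞) f) (hg : ContDiff ℝ (⊤ : ℕ∞) g) (hh : ContDiff ℝ (⊤ : ℕ∞) h)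
    (hreg : ∀ y : ℝ, deriv g y - a ≠ 0)
    (htor : ∀ y : ℝ, deriv (deriv g) y * deriv (deriv (deriv h)) y
      - deriv (deriv (deriv g)) y * deriv (deriv h) y ≠ 0)
    (hmin : ∀ x y : ℝ,
      (1 + (deriv g y) ^ 2) * (deriv g y - a) * deriv (deriv f) x
        + (1 + a ^ 2) * (deriv (deriv h) y * (deriv g y - a)
          - deriv (deriv g) y * (deriv h y - deriv f x)) = 0) :
    False := by
  have h1a : (1 : ℝ) + a ^ 2 ≠ 0 := by positivity
  by_cases hconst : ∀ x : ℝ, deriv f x = deriv f 0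
  · -- f' constant, so f'' ≡ 0
    have hdf : deriv f = fun _ => deriv f 0 := funext hconst
    have hf2 : deriv (deriv f) 0 = 0 := by rw [hdf]; exact deriv_const _ _
    refine key_lemma g h a 1 (deriv f 0) one_ne_zero hg hh hreg htor ?_
    intro y
    have E := hmin 0 y
    rw [hf2] at E
    have hE : (1 + a ^ 2) * (deriv (deriv h) y * (deriv g y - a)
        - deriv (deriv g) y * (deriv h y - deriv f 0)) = 0 := by linear_combination E
    have hX := (mul_eq_zero.mp hE).resolve_left h1a
    linear_combination hX
  · push_neg at hconst
    obtain ⟨x₁, hx₁⟩ := hconst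
    have hΔ₁ : deriv f x₁ - deriv f 0 ≠ 0 := sub_ne_zero.mpr hx₁
    have E2 : ∀ y : ℝ, (1 + (deriv g y) ^ 2) * (deriv g y - a)
        * (deriv (deriv f) x₁ - deriv (deriv f) 0)
        + (1 + a ^ 2) * (deriv (deriv g) y * (deriv f x₁ - deriv f 0)) = 0 := by
      intro y
      linear_combination hmin x₁ y - hmin 0 y
    by_cases hΔ₂ : deriv (deriv f) x₁ - deriv (deriv f) 0 = 0
    · -- then g'' ≡ 0, contradicting the torsion condition
      have hg2 : ∀ y : ℝ, deriv (deriv g) y = 0 := by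
        intro y
        have h5 : deriv (deriv g) y * ((1 + a ^ 2) * (deriv f x₁ - deriv f 0)) = 0 := by
          linear_combination E2 y - (1 + (deriv g y) ^ 2) * (deriv g y - a) * hΔ₂
        exact (mul_eq_zero.mp h5).resolve_right (mul_ne_zero h1a hΔ₁)
      have hg3 : deriv (deriv (deriv g)) 0 = 0 := by
        rw [show deriv (deriv g) = (fun _ => (0 : ℝ)) from funext hg2]
        exact deriv_const _ _
      apply htor 0
      rw [hg2 0, hg3]; ring
    · -- nondegenerate case: reduce to the key lemma
      refine key_lemma g h a ((1 + a ^ 2) * (deriv (deriv f) x₁ - deriv (deriv f) 0))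
        ((1 + a ^ 2) * (deriv f x₁ * (deriv (deriv f) x₁ - deriv (deriv f) 0)
          - (deriv f x₁ - deriv f 0) * deriv (deriv f) x₁))
        (mul_ne_zero h1a hΔ₂) hg hh hreg htor ?_
      intro y
      linear_combination (deriv (deriv f) x₁ - deriv (deriv f) 0) * hmin x₁ y
        - deriv (deriv f) x₁ * E2 y
end

section
/- Let g, h : ℝ → ℝ be smooth, a, d₁, H₀ ∈ ℝ with H₀ ≠ 0 and g'(y) − a ≠ 0 for all y. Suppose (2H₀/(1+a²))·(g'(y) − a) = d/dy [(h'(y) − d₁)/(g'(y) − a)] for all y. Then there exist constants d₀, d₃ such that h(y) = (H₀/(1+a²))·(g(y) − ay)² + d₁y + d₃ + d₀·(g(y) − ay) for all y. -/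
/-- Integration step for Type II cylinders with nonzero constant isotropic mean
curvature: the ODE `(2H₀/(1+a²))(g'−a) = ((h'−d₁)/(g'−a))'` integrates to
`h = (H₀/(1+a²))(g−ay)² + d₁y + d₃ + d₀(g−ay)`. -/
theorem stmt11 (g h : ℝ → ℝ) (a d₁ H₀ : ℝ)
    (hg : ContDiff ℝ (⊤ : ℕ∞) g) (hh : ContDiff ℝ (⊤ : ℕ∞) h)
    (hH₀ : H₀ ≠ 0)
    (hreg : ∀ y : ℝ, deriv g y - a ≠ 0)
    (hODE : ∀ y : ℝ, 2 * H₀ / (1 + a ^ 2) * (deriv g y - a)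
      = deriv (fun t => (deriv h t - d₁) / (deriv g t - a)) y) :
    ∃ d₀ d₃ : ℝ, ∀ y : ℝ,
      h y = H₀ / (1 + a ^ 2) * (g y - a * y) ^ 2 + d₁ * y + d₃
        + d₀ * (g y - a * y) := by
  have h1a : (1 : ℝ) + a ^ 2 ≠ 0 := by positivity
  set c : ℝ := 2 * H₀ / (1 + a ^ 2) with hc
  have hgd : Differentiable ℝ g := hg.differentiable (by simp)
  have hhd : Differentiable ℝ h := hh.differentiable (by simp)
  have hgd' : Differentiable ℝ (deriv g) :=
    ((contDiff_infty_iff_deriv.mp (hg.of_le (by simp))).2).differentiable (by simp)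
  have hhd' : Differentiable ℝ (deriv h) :=
    ((contDiff_infty_iff_deriv.mp (hh.of_le (by simp))).2).differentiable (by simp)
  set u : ℝ → ℝ := fun y => g y - a * y with hu
  have hud : ∀ y, HasDerivAt u (deriv g y - a) y := fun y =>
    ((hgd y).hasDerivAt).sub (by simpa using (hasDerivAt_id y).const_mul a)
  set φ : ℝ → ℝ := fun t => (deriv h t - d₁) / (deriv g t - a) with hφ
  have hφd : Differentiable ℝ φ :=
    (hhd'.sub_const d₁).div (hgd'.sub_const a) hreg
  have hcud : ∀ y, HasDerivAt (fun y => c * u y) (c * (deriv g y - a)) y :=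
    fun y => (hud y).const_mul c
  have hF : ∀ y, deriv (fun y => φ y - c * u y) y = 0 := by
    intro y
    rw [deriv_fun_sub (hφd y) (hcud y).differentiableAt, (hcud y).deriv, ← hODE y]
    ring
  have hFdiff : Differentiable ℝ (fun y => φ y - c * u y) :=
    hφd.sub (fun y => (hcud y).differentiableAt)
  obtain ⟨d₀, hd₀⟩ : ∃ d₀, ∀ y, φ y = c * u y + d₀ := by
    refine ⟨φ 0 - c * u 0, fun y => ?_⟩
    have := is_const_of_deriv_eq_zero hFdiff hF y 0
    linarith [this]
  have hh' : ∀ y, deriv h y = (c * u y + d₀) * (deriv g y - a) + d₁ := by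
    intro y
    have h1 : (deriv h y - d₁) / (deriv g y - a) = c * u y + d₀ := hd₀ y
    rw [div_eq_iff (hreg y)] at h1
    linarith [h1]
  set P : ℝ → ℝ := fun y => c / 2 * u y ^ 2 + d₁ * y + d₀ * u y with hP
  have hPd : ∀ y, HasDerivAt P
      (c / 2 * (2 * u y * (deriv g y - a)) + d₁ + d₀ * (deriv g y - a)) y := by
    intro y
    exact ((((hud y).pow 2).const_mul (c / 2)).add
      ((hasDerivAt_id y).const_mul d₁)).add ((hud y).const_mul d₀) |>.congr_deriv (by ring)
  have hG : ∀ y, deriv (fun y => h y - P y) y = 0 := by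
    intro y
    have := ((hhd y).hasDerivAt.sub (hPd y)).deriv
    rw [show (fun y => h y - P y) = h - P from rfl, this, hh' y]
    ring
  have hGdiff : Differentiable ℝ (fun y => h y - P y) :=
    hhd.sub (fun y => (hPd y).differentiableAt)
  refine ⟨d₀, h 0 - P 0, fun y => ?_⟩
  have hconst := is_const_of_deriv_eq_zero hGdiff hG y 0
  have hc2 : H₀ / (1 + a ^ 2) = c / 2 := by
    rw [hc]; field_simp
  rw [hc2]
  simp only [hP, hu] at hconst ⊢
  linarith [hconst]
end

section
/- Let f, g, h : ℝ → ℝ be smooth, a ∈ ℝ, with g'(y) − f'(x) ≠ 0 for all x, y and g''h''' − g'''h'' ≠ 0 everywhere. If −f''(x)·(h'(y) − a)·[h''(y)(g'(y) − f'(x)) − g''(y)(h'(y) − a)] = 0 for all x, y (vanishing isotropic Gaussian curvature of a Type III surface), then f'' ≡ 0, i.e., α is a non-isotropic line and the surface is a generalized cylinder. -/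
/-- Type III translation surface with vanishing isotropic Gaussian curvature:
`f'' ≡ 0`, i.e. the surface is a generalized cylinder. -/
theorem stmt13 (f g h : ℝ → ℝ) (a : ℝ)
    (hf : ContDiff ℝ (⊤ : ℕ∞) f) (hg : ContDiff ℝ (⊤ : ℕ∞) g) (hh : ContDiff ℝ (⊤ : ℕ∞) h)
    (hreg : ∀ x y : ℝ, deriv g y - deriv f x ≠ 0)
    (htor : ∀ y : ℝ, deriv (deriv g) y * deriv (deriv (deriv h)) y
      - deriv (deriv (deriv g)) y * deriv (deriv h) y ≠ 0)
    (hK : ∀ x y : ℝ, -(deriv (deriv f) x) * (deriv h y - a) *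
      (deriv (deriv h) y * (deriv g y - deriv f x)
        - deriv (deriv g) y * (deriv h y - a)) = 0) :
    ∀ x : ℝ, deriv (deriv f) x = 0 := by
  intro x₀
  by_contra hx0
  -- smoothness of derivatives
  have hf' : ContDiff ℝ ((⊤:ℕ∞)) f := hf.of_le (by simp)
  have hd : ContDiff ℝ ((⊤:ℕ∞)) (deriv f) := (contDiff_infty_iff_deriv.mp hf').2
  have hdd_cont : Continuous (deriv (deriv f)) :=
    ((contDiff_infty_iff_deriv.mp hd).2).continuous
  -- there is y₀ with h' y₀ ≠ a
  obtain ⟨y₀, hy0⟩ : ∃ y, deriv h y ≠ a := by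
    by_contra hall
    push_neg at hall
    have h1 : deriv h = fun _ => a := funext hall
    have h2 : deriv (deriv h) = fun _ => (0 : ℝ) := by
      rw [h1]; funext y; simp
    have h3 : deriv (deriv (deriv h)) = fun _ => (0 : ℝ) := by
      rw [h2]; funext y; simp
    apply htor 0
    rw [h3, h2]; simp
  have hK0 := hK x₀ y₀
  have hfac : deriv (deriv h) y₀ * (deriv g y₀ - deriv f x₀)
      - deriv (deriv g) y₀ * (deriv h y₀ - a) = 0 := by
    rcases mul_eq_zero.mp hK0 with h' | h'
    · rcases mul_eq_zero.mp h' with h'' | h''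
      · exact absurd (by linarith [neg_eq_zero.mp h'']) hx0
      · exact absurd (sub_eq_zero.mp h'') (by intro he; exact hy0 he)
    · exact h'
  have hh2 : deriv (deriv h) y₀ ≠ 0 := by
    intro hz
    have hg2 : deriv (deriv g) y₀ = 0 := by
      rw [hz] at hfac
      have : deriv (deriv g) y₀ * (deriv h y₀ - a) = 0 := by linarith
      rcases mul_eq_zero.mp this with h' | h'
      · exact h'
      · exact absurd (sub_eq_zero.mp h') hy0
    apply htor y₀
    rw [hz, hg2]; ring
  set c : ℝ := deriv g y₀ - deriv (deriv g) y₀ * (deriv h y₀ - a) / deriv (deriv h) y₀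
    with hc
  have key : ∀ x : ℝ, deriv (deriv f) x ≠ 0 → deriv f x = c := by
    intro x hx
    have hKx := hK x y₀
    have hfacx : deriv (deriv h) y₀ * (deriv g y₀ - deriv f x)
        - deriv (deriv g) y₀ * (deriv h y₀ - a) = 0 := by
      rcases mul_eq_zero.mp hKx with h' | h'
      · rcases mul_eq_zero.mp h' with h'' | h''
        · exact absurd (by linarith [neg_eq_zero.mp h'']) hx
        · exact absurd (sub_eq_zero.mp h'') hy0
      · exact h'
    rw [hc]
    field_simp
    nlinarith [hfacx]
  -- f' is locally constant near x₀
  have hev : ∀ᶠ x in nhds x₀, deriv f x = c := by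
    filter_upwards [hdd_cont.continuousAt.eventually_ne hx0] with x hx
    exact key x hx
  have : deriv (deriv f) x₀ = deriv (fun _ : ℝ => c) x₀ :=
    Filter.EventuallyEq.deriv_eq hev
  rw [this] at hx0
  simp at hx0
end

section
/- Let f, g, h : ℝ → ℝ be smooth, a ∈ ℝ, K₀ ∈ ℝ nonzero, with g'(y) − f'(x) ≠ 0 for all x, y and g''h''' − g'''h'' ≠ 0 everywhere. Then the equation −f''(x)(h'(y) − a)[h''(y)(g'(y) − f'(x)) − g''(y)(h'(y) − a)] = K₀·(g'(y) − f'(x))⁴ for all x, y has no solution. That is, there is no Type III translation surface with nonzero constant isotropic Gaussian curvature. -/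
open scoped ContDiff

/-- A real quadratic vanishing at three distinct points has all coefficients zero. -/
lemma quad_three_roots (A B C s1 s2 s3 : ℝ) (h12 : s1 ≠ s2) (h13 : s1 ≠ s3) (h23 : s2 ≠ s3)
    (e1 : A*s1^2 + B*s1 + C = 0) (e2 : A*s2^2 + B*s2 + C = 0)
    (e3 : A*s3^2 + B*s3 + C = 0) : A = 0 ∧ B = 0 ∧ C = 0 := by
  have k12 : A*(s1+s2) + B = 0 := by
    have hz : (s1 - s2) * (A*(s1+s2) + B) = 0 := by linear_combination e1 - e2
    rcases mul_eq_zero.mp hz with hq | hq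
    · exact absurd (sub_eq_zero.mp hq) h12
    · exact hq
  have k13 : A*(s1+s3) + B = 0 := by
    have hz : (s1 - s3) * (A*(s1+s3) + B) = 0 := by linear_combination e1 - e3
    rcases mul_eq_zero.mp hz with hq | hq
    · exact absurd (sub_eq_zero.mp hq) h13
    · exact hq
  have hA : A = 0 := by
    have hz : A * (s2 - s3) = 0 := by linear_combination k12 - k13
    rcases mul_eq_zero.mp hz with hq | hq
    · exact hq
    · exact absurd (sub_eq_zero.mp hq) h23
  have hB : B = 0 := by linear_combination k12 - (s1+s2) * hA
  exact ⟨hA, hB, by linear_combination e1 - s1^2 * hA - s1 * hB⟩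

/-- No Type III translation surface has nonzero constant isotropic Gaussian
curvature `K₀`. -/
theorem stmt14 (f g h : ℝ → ℝ) (a K₀ : ℝ)
    (hf : ContDiff ℝ (⊤ : ℕ∞) f) (hg : ContDiff ℝ (⊤ : ℕ∞) g) (hh : ContDiff ℝ (⊤ : ℕ∞) h)
    (hK₀ : K₀ ≠ 0)
    (hreg : ∀ x y : ℝ, deriv g y - deriv f x ≠ 0)
    (htor : ∀ y : ℝ, deriv (deriv g) y * deriv (deriv (deriv h)) y
      - deriv (deriv (deriv g)) y * deriv (deriv h) y ≠ 0)
    (hK : ∀ x y : ℝ, -(deriv (deriv f) x) * (deriv h y - a) *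
      (deriv (deriv h) y * (deriv g y - deriv f x)
        - deriv (deriv g) y * (deriv h y - a))
      = K₀ * (deriv g y - deriv f x) ^ 4) :
    False := by
  have hf' : ContDiff ℝ ∞ f := hf.of_le (by simp)
  have hg' : ContDiff ℝ ∞ g := hg.of_le (by simp)
  have hh' : ContDiff ℝ ∞ h := hh.of_le (by simp)
  have hf1 : ContDiff ℝ ∞ (deriv f) := (contDiff_infty_iff_deriv.mp hf').2
  have hg1 : ContDiff ℝ ∞ (deriv g) := (contDiff_infty_iff_deriv.mp hg').2
  have hg2 : ContDiff ℝ ∞ (deriv (deriv g)) := (contDiff_infty_iff_deriv.mp hg1).2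
  have hh1 : ContDiff ℝ ∞ (deriv h) := (contDiff_infty_iff_deriv.mp hh').2
  have hh2 : ContDiff ℝ ∞ (deriv (deriv h)) := (contDiff_infty_iff_deriv.mp hh1).2
  -- `f''` never vanishes
  have hf2 : ∀ x, deriv (deriv f) x ≠ 0 := by
    intro x h0
    have hx := hK x 0
    rw [h0] at hx
    simp only [neg_zero, zero_mul] at hx
    exact (mul_ne_zero hK₀ (pow_ne_zero 4 (hreg x 0))) hx.symm
  -- `f'` is injective (Rolle)
  have hinj : Function.Injective (deriv f) := by
    have key : ∀ x1 x2 : ℝ, x1 < x2 → deriv f x1 = deriv f x2 → False := by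
      intro x1 x2 hlt heq
      obtain ⟨c, _, hc⟩ := exists_deriv_eq_zero hlt
        hf1.continuous.continuousOn heq
      exact hf2 c hc
    intro x1 x2 heq
    rcases lt_trichotomy x1 x2 with hlt | he | hlt
    · exact absurd (key x1 x2 hlt heq) not_false
    · exact he
    · exact absurd (key x2 x1 hlt heq.symm) not_false
  -- differentiate the curvature identity with respect to `y`
  have key : ∀ x y : ℝ,
      (-(deriv (deriv f) x) * deriv (deriv h) y) *
        (deriv (deriv h) y * (deriv g y - deriv f x)
          - deriv (deriv g) y * (deriv h y - a))
      + (-(deriv (deriv f) x) * (deriv h y - a)) *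
        ((deriv (deriv (deriv h)) y * (deriv g y - deriv f x)
            + deriv (deriv h) y * deriv (deriv g) y)
          - (deriv (deriv (deriv g)) y * (deriv h y - a)
            + deriv (deriv g) y * deriv (deriv h) y))
      = K₀ * (4 * (deriv g y - deriv f x) ^ 3 * deriv (deriv g) y) := by
    intro x y
    have dH : HasDerivAt (fun y => deriv h y - a) (deriv (deriv h) y) y :=
      ((hh1.differentiable (by norm_num) y).hasDerivAt).sub_const a
    have dH2 : HasDerivAt (deriv (deriv h)) (deriv (deriv (deriv h)) y) y :=
      (hh2.differentiable (by norm_num) y).hasDerivAt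
    have dG : HasDerivAt (fun y => deriv g y - deriv f x) (deriv (deriv g) y) y :=
      ((hg1.differentiable (by norm_num) y).hasDerivAt).sub_const (deriv f x)
    have dG2 : HasDerivAt (deriv (deriv g)) (deriv (deriv (deriv g)) y) y :=
      (hg2.differentiable (by norm_num) y).hasDerivAt
    have dInner : HasDerivAt
        (fun y => deriv (deriv h) y * (deriv g y - deriv f x)
          - deriv (deriv g) y * (deriv h y - a))
        ((deriv (deriv (deriv h)) y * (deriv g y - deriv f x)
            + deriv (deriv h) y * deriv (deriv g) y)
          - (deriv (deriv (deriv g)) y * (deriv h y - a)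
            + deriv (deriv g) y * deriv (deriv h) y)) y :=
      (dH2.mul dG).sub (dG2.mul dH)
    have dLHS : HasDerivAt
        (fun y => -(deriv (deriv f) x) * (deriv h y - a) *
          (deriv (deriv h) y * (deriv g y - deriv f x)
            - deriv (deriv g) y * (deriv h y - a)))
        ((-(deriv (deriv f) x) * deriv (deriv h) y) *
          (deriv (deriv h) y * (deriv g y - deriv f x)
            - deriv (deriv g) y * (deriv h y - a))
        + (-(deriv (deriv f) x) * (deriv h y - a)) *
          ((deriv (deriv (deriv h)) y * (deriv g y - deriv f x)
              + deriv (deriv h) y * deriv (deriv g) y)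
            - (deriv (deriv (deriv g)) y * (deriv h y - a)
              + deriv (deriv g) y * deriv (deriv h) y))) y :=
      (dH.const_mul (-(deriv (deriv f) x))).mul dInner
    have dRHS : HasDerivAt
        (fun y => K₀ * (deriv g y - deriv f x) ^ 4)
        (K₀ * ((4:ℕ) * (deriv g y - deriv f x) ^ (4-1) * deriv (deriv g) y)) y :=
      (dG.pow 4).const_mul K₀
    have hfun : (fun y => -(deriv (deriv f) x) * (deriv h y - a) *
          (deriv (deriv h) y * (deriv g y - deriv f x)
            - deriv (deriv g) y * (deriv h y - a)))
        = fun y => K₀ * (deriv g y - deriv f x) ^ 4 := funext fun y => hK x y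
    have huniq := dLHS.unique (hfun.symm ▸ dRHS)
    rw [huniq]
    push_cast
    ring
  -- the quadratic identity in `s = g' - f'`
  have quad : ∀ x y : ℝ,
      (deriv (deriv h) y ^ 2 + (deriv h y - a) * deriv (deriv (deriv h)) y)
          * (deriv g y - deriv f x) ^ 2
      + (-( (deriv h y - a) * (deriv (deriv (deriv g)) y * (deriv h y - a)
            + 5 * deriv (deriv g) y * deriv (deriv h) y)))
          * (deriv g y - deriv f x)
      + 4 * (deriv (deriv g) y) ^ 2 * (deriv h y - a) ^ 2 = 0 := by
    intro x y
    have hc : deriv (deriv f) x *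
        ((deriv (deriv h) y ^ 2 + (deriv h y - a) * deriv (deriv (deriv h)) y)
            * (deriv g y - deriv f x) ^ 2
        + (-( (deriv h y - a) * (deriv (deriv (deriv g)) y * (deriv h y - a)
              + 5 * deriv (deriv g) y * deriv (deriv h) y)))
            * (deriv g y - deriv f x)
        + 4 * (deriv (deriv g) y) ^ 2 * (deriv h y - a) ^ 2) = 0 := by
      linear_combination (-(deriv g y - deriv f x)) * key x y
        + (4 * deriv (deriv g) y) * hK x y
    exact (mul_eq_zero.mp hc).resolve_left (hf2 x)
  -- evaluate at y = 0 with three distinct values of f'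
  have h01 : deriv f 0 ≠ deriv f 1 := fun e => (by norm_num : (0:ℝ) ≠ 1) (hinj e)
  have h02 : deriv f 0 ≠ deriv f 2 := fun e => (by norm_num : (0:ℝ) ≠ 2) (hinj e)
  have h12 : deriv f 1 ≠ deriv f 2 := fun e => (by norm_num : (1:ℝ) ≠ 2) (hinj e)
  have hs01 : deriv g 0 - deriv f 0 ≠ deriv g 0 - deriv f 1 := fun e => h01 (by linarith)
  have hs02 : deriv g 0 - deriv f 0 ≠ deriv g 0 - deriv f 2 := fun e => h02 (by linarith)
  have hs12 : deriv g 0 - deriv f 1 ≠ deriv g 0 - deriv f 2 := fun e => h12 (by linarith)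
  obtain ⟨-, hB, hC⟩ := quad_three_roots _ _ _ _ _ _ hs01 hs02 hs12
    (quad 0 0) (quad 1 0) (quad 2 0)
  -- from the constant coefficient: g''(0) * (h'(0) - a) = 0
  have hga : deriv (deriv g) 0 * (deriv h 0 - a) = 0 := by
    have hsq : (deriv (deriv g) 0 * (deriv h 0 - a)) ^ 2 = 0 := by linarith [sq_nonneg (deriv (deriv g) 0 * (deriv h 0 - a))]
    exact pow_eq_zero_iff (by norm_num) |>.mp hsq
  rcases mul_eq_zero.mp hga with hg20 | hA0
  · -- g''(0) = 0; then from hB, g'''(0) * (h'(0)-a) ^2 = 0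
    by_cases hA : deriv h 0 - a = 0
    · have hx := hK 0 0
      rw [hA] at hx
      simp only [mul_zero, zero_mul] at hx
      exact (mul_ne_zero hK₀ (pow_ne_zero 4 (hreg 0 0))) hx.symm
    · have hg3 : deriv (deriv (deriv g)) 0 = 0 := by
        have hB' : (deriv h 0 - a) ^ 2 * deriv (deriv (deriv g)) 0 = 0 := by
          linear_combination -hB - 5 * (deriv h 0 - a) * deriv (deriv h) 0 * hg20
        exact (mul_eq_zero.mp hB').resolve_left (pow_ne_zero 2 hA)
      exact htor 0 (by rw [hg20, hg3]; ring)
  · have hx := hK 0 0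
    rw [hA0] at hx
    simp only [mul_zero, zero_mul] at hx
    exact (mul_ne_zero hK₀ (pow_ne_zero 4 (hreg 0 0))) hx.symm
end

section
/- Let f, g, h : ℝ → ℝ be smooth, a ∈ ℝ, with g'(y) − f'(x) ≠ 0 for all x, y and g''h''' − g'''h'' ≠ 0 everywhere. Then the isotropic minimality equation [1 + (f'(x))²][h''(y)(g'(y) − f'(x)) − g''(y)(h'(y) − a)] − [1 + (g'(y))²](h'(y) − a)f''(x) = 0 for all x, y has no solution. That is, no Type III translation surface is isotropic minimal. -/
/-- Auxiliary: if `h'' = μ·(1+g'²)(h'-a)` and the minimality-type identity holds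
for some constants `c₁, lam₁`, then the torsion-type quantity vanishes somewhere. -/
lemma aux15 (g h : ℝ → ℝ) (a c₁ lam₁ μ : ℝ)
    (hdg : Differentiable ℝ (deriv g)) (hdh : Differentiable ℝ (deriv h))
    (hE₁ : ∀ y, deriv (deriv h) y * (deriv g y - c₁)
        - deriv (deriv g) y * (deriv h y - a)
        = lam₁ * ((1 + (deriv g y) ^ 2) * (deriv h y - a)))
    (hdd : ∀ y, deriv (deriv h) y
        = μ * ((1 + (deriv g y) ^ 2) * (deriv h y - a)))
    (htor : ∀ y : ℝ, deriv (deriv g) y * deriv (deriv (deriv h)) y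
      - deriv (deriv (deriv g)) y * deriv (deriv h) y ≠ 0) :
    False := by
  have e3 : ∀ y : ℝ, deriv (deriv (deriv h)) y
      = μ * ((2 * deriv g y * deriv (deriv g) y) * (deriv h y - a)
          + (1 + (deriv g y) ^ 2) * deriv (deriv h) y) := by
    intro y
    have A : HasDerivAt (fun z => 1 + (deriv g z) ^ 2)
        (2 * deriv g y * deriv (deriv g) y) y := by
      have := ((hdg y).hasDerivAt.pow 2).const_add (1 : ℝ)
      exact this.congr_deriv (by norm_num)
    have B : HasDerivAt (fun z => μ * ((1 + (deriv g z) ^ 2) * (deriv h z - a)))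
        (μ * ((2 * deriv g y * deriv (deriv g) y) * (deriv h y - a)
          + (1 + (deriv g y) ^ 2) * deriv (deriv h) y)) y :=
      (A.mul (((hdh y).hasDerivAt).sub_const a)).const_mul μ
    conv_lhs => rw [show deriv (deriv h)
      = fun z => μ * ((1 + (deriv g z) ^ 2) * (deriv h z - a)) from funext hdd]
    exact B.deriv
  by_cases hex : ∃ y₀, deriv (deriv h) y₀ = 0
  · obtain ⟨y₀, hz⟩ := hex
    have hs : (0 : ℝ) < 1 + (deriv g y₀) ^ 2 := by positivity
    have h1 : (1 + (deriv g y₀) ^ 2) * (μ * (deriv h y₀ - a)) = 0 := by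
      have h2 := hdd y₀
      rw [hz] at h2
      linear_combination -h2
    have hμv : μ * (deriv h y₀ - a) = 0 :=
      (mul_eq_zero.mp h1).resolve_left (ne_of_gt hs)
    have hz3 : deriv (deriv (deriv h)) y₀ = 0 := by
      rw [e3 y₀, hz]
      linear_combination (2 * deriv g y₀ * deriv (deriv g) y₀) * hμv
    exact htor y₀ (by rw [hz, hz3]; ring)
  · push_neg at hex
    have hq : ∀ y, deriv h y - a ≠ 0 := by
      intro y hy
      apply hex y
      rw [hdd y, hy]
      ring
    have hgg : ∀ y, deriv (deriv g) y
        = (1 + (deriv g y) ^ 2) * (μ * (deriv g y - c₁) - lam₁) := by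
      intro y
      apply mul_right_cancel₀ (hq y)
      have h1 := hE₁ y
      rw [hdd y] at h1
      linear_combination -h1
    have e3g : deriv (deriv (deriv g)) 0
        = (2 * deriv g 0 * deriv (deriv g) 0) * (μ * (deriv g 0 - c₁) - lam₁)
          + (1 + (deriv g 0) ^ 2) * (μ * deriv (deriv g) 0) := by
      have A : HasDerivAt (fun z => 1 + (deriv g z) ^ 2)
          (2 * deriv g 0 * deriv (deriv g) 0) 0 := by
        have := ((hdg 0).hasDerivAt.pow 2).const_add (1 : ℝ)
        exact this.congr_deriv (by norm_num)
      have B : HasDerivAt (fun z => μ * (deriv g z - c₁) - lam₁)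
          (μ * deriv (deriv g) 0) 0 :=
        ((((hdg 0).hasDerivAt).sub_const c₁).const_mul μ).sub_const lam₁
      conv_lhs => rw [show deriv (deriv g)
        = fun z => (1 + (deriv g z) ^ 2) * (μ * (deriv g z - c₁) - lam₁)
        from funext hgg]
      exact (A.mul B).deriv
    apply htor 0
    rw [e3 0, e3g, hdd 0, hgg 0]
    ring

/-- No Type III translation surface is isotropic minimal. -/
theorem stmt15 (f g h : ℝ → ℝ) (a : ℝ)
    (hf : ContDiff ℝ (⊤ : ℕ∞) f) (hg : ContDiff ℝ (⊤ : ℕ∞) g) (hh : ContDiff ℝ (⊤ : ℕ∞) h)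
    (hreg : ∀ x y : ℝ, deriv g y - deriv f x ≠ 0)
    (htor : ∀ y : ℝ, deriv (deriv g) y * deriv (deriv (deriv h)) y
      - deriv (deriv (deriv g)) y * deriv (deriv h) y ≠ 0)
    (hmin : ∀ x y : ℝ,
      (1 + (deriv f x) ^ 2) * (deriv (deriv h) y * (deriv g y - deriv f x)
          - deriv (deriv g) y * (deriv h y - a))
        - (1 + (deriv g y) ^ 2) * (deriv h y - a) * deriv (deriv f) x = 0) :
    False := by
  have hg0 : ContDiff ℝ ((⊤ : ℕ∞) : WithTop ℕ∞) g := hg.of_le (by simp)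
  have hh0 : ContDiff ℝ ((⊤ : ℕ∞) : WithTop ℕ∞) h := hh.of_le (by simp)
  have hf0 : ContDiff ℝ ((⊤ : ℕ∞) : WithTop ℕ∞) f := hf.of_le (by simp)
  have hg1 : ContDiff ℝ ((⊤ : ℕ∞) : WithTop ℕ∞) (deriv g) := (contDiff_infty_iff_deriv.mp hg0).2
  have hh1 : ContDiff ℝ ((⊤ : ℕ∞) : WithTop ℕ∞) (deriv h) := (contDiff_infty_iff_deriv.mp hh0).2
  have hg2 : ContDiff ℝ ((⊤ : ℕ∞) : WithTop ℕ∞) (deriv (deriv g)) := (contDiff_infty_iff_deriv.mp hg1).2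
  have hh2 : ContDiff ℝ ((⊤ : ℕ∞) : WithTop ℕ∞) (deriv (deriv h)) := (contDiff_infty_iff_deriv.mp hh1).2
  have hdg : Differentiable ℝ (deriv g) := (contDiff_infty_iff_deriv.mp hg1).1
  have hddg : Differentiable ℝ (deriv (deriv g)) := (contDiff_infty_iff_deriv.mp hg2).1
  have hdh : Differentiable ℝ (deriv h) := (contDiff_infty_iff_deriv.mp hh1).1
  have hddh : Differentiable ℝ (deriv (deriv h)) := (contDiff_infty_iff_deriv.mp hh2).1
  have hdf : Differentiable ℝ (deriv f) :=
    (contDiff_infty_iff_deriv.mp (contDiff_infty_iff_deriv.mp hf0).2).1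
  by_cases hcase : ∃ x₀, deriv (deriv f) x₀ = 0
  · obtain ⟨x₀, hx0⟩ := hcase
    have hE0 : ∀ y, deriv (deriv h) y * (deriv g y - deriv f x₀)
        - deriv (deriv g) y * (deriv h y - a) = 0 := by
      intro y
      have h1 := hmin x₀ y
      rw [hx0] at h1
      have hu : (1 + (deriv f x₀) ^ 2) ≠ 0 := by positivity
      have h2 : (1 + (deriv f x₀) ^ 2) * (deriv (deriv h) y * (deriv g y - deriv f x₀)
          - deriv (deriv g) y * (deriv h y - a)) = 0 := by linear_combination h1
      exact (mul_eq_zero.mp h2).resolve_left hu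
    have hd : HasDerivAt (fun y => deriv (deriv h) y * (deriv g y - deriv f x₀)
        - deriv (deriv g) y * (deriv h y - a))
        (deriv (deriv (deriv h)) 0 * (deriv g 0 - deriv f x₀)
          + deriv (deriv h) 0 * deriv (deriv g) 0
          - (deriv (deriv (deriv g)) 0 * (deriv h 0 - a)
          + deriv (deriv g) 0 * deriv (deriv h) 0)) 0 :=
      (((hddh 0).hasDerivAt).mul (((hdg 0).hasDerivAt).sub_const _)).sub
        (((hddg 0).hasDerivAt).mul (((hdh 0).hasDerivAt).sub_const _))
    rw [show (fun y => deriv (deriv h) y * (deriv g y - deriv f x₀)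
        - deriv (deriv g) y * (deriv h y - a)) = (fun _ => (0 : ℝ)) from funext hE0] at hd
    have hzero := hd.unique (hasDerivAt_const 0 0)
    exact (mul_ne_zero (htor 0) (hreg x₀ 0))
      (by linear_combination (deriv (deriv g) 0) * hzero
            - (deriv (deriv (deriv g)) 0) * hE0 0)
  · push_neg at hcase
    have hne : deriv f 1 ≠ deriv f 0 := by
      intro heq
      obtain ⟨x, _, hx⟩ := exists_deriv_eq_zero (by norm_num : (0 : ℝ) < 1)
        (hdf.continuous.continuousOn) heq.symm
      exact hcase x hx
    have hsub : deriv f 1 - deriv f 0 ≠ 0 := sub_ne_zero.mpr hne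
    obtain ⟨lam₁, hE₁⟩ : ∃ lam : ℝ, ∀ y, deriv (deriv h) y * (deriv g y - deriv f 0)
        - deriv (deriv g) y * (deriv h y - a)
        = lam * ((1 + (deriv g y) ^ 2) * (deriv h y - a)) := by
      refine ⟨deriv (deriv f) 0 / (1 + (deriv f 0) ^ 2), fun y => ?_⟩
      have hu : (1 + (deriv f 0) ^ 2) ≠ 0 := by positivity
      rw [div_mul_eq_mul_div, eq_div_iff hu]
      linear_combination hmin 0 y
    obtain ⟨lam₂, hE₂⟩ : ∃ lam : ℝ, ∀ y, deriv (deriv h) y * (deriv g y - deriv f 1)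
        - deriv (deriv g) y * (deriv h y - a)
        = lam * ((1 + (deriv g y) ^ 2) * (deriv h y - a)) := by
      refine ⟨deriv (deriv f) 1 / (1 + (deriv f 1) ^ 2), fun y => ?_⟩
      have hu : (1 + (deriv f 1) ^ 2) ≠ 0 := by positivity
      rw [div_mul_eq_mul_div, eq_div_iff hu]
      linear_combination hmin 1 y
    obtain ⟨μ, hdd⟩ : ∃ μ : ℝ, ∀ y, deriv (deriv h) y
        = μ * ((1 + (deriv g y) ^ 2) * (deriv h y - a)) := by
      refine ⟨(lam₁ - lam₂) / (deriv f 1 - deriv f 0), fun y => ?_⟩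
      rw [div_mul_eq_mul_div, eq_div_iff hsub]
      linear_combination hE₁ y - hE₂ y
    exact aux15 g h a (deriv f 0) lam₁ μ hdg hdh hE₁ hdd htor
end

section
/- Let g, h : ℝ → ℝ be smooth, d₁, a, H₀ ∈ ℝ with H₀ ≠ 0 and g'(y) − d₁ ≠ 0 for all y. Suppose (2H₀/(1+d₁²))·(g'(y) − d₁) = d/dy [(h'(y) − a)/(g'(y) − d₁)] for all y. Then h(y) = (H₀/(1+d₁²))·(g(y) − d₁y)² + ay + d₃(g(y) − d₁y) + d₄ for some constants d₃, d₄. -/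
/-- Cylinder case of Type III surfaces with nonzero constant isotropic mean
curvature: integrating the reduced ODE twice gives
`h = (H₀/(1+d₁²))(g−d₁y)² + ay + d₃(g−d₁y) + d₄`. -/
theorem stmt16 (g h : ℝ → ℝ) (d₁ a H₀ : ℝ)
    (hg : ContDiff ℝ (⊤ : ℕ∞) g) (hh : ContDiff ℝ (⊤ : ℕ∞) h)
    (hH₀ : H₀ ≠ 0)
    (hreg : ∀ y : ℝ, deriv g y - d₁ ≠ 0)
    (hODE : ∀ y : ℝ, 2 * H₀ / (1 + d₁ ^ 2) * (deriv g y - d₁)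
      = deriv (fun t => (deriv h t - a) / (deriv g t - d₁)) y) :
    ∃ d₃ d₄ : ℝ, ∀ y : ℝ,
      h y = H₀ / (1 + d₁ ^ 2) * (g y - d₁ * y) ^ 2 + a * y
        + d₃ * (g y - d₁ * y) + d₄ := by
  have hg' : ContDiff ℝ ((⊤ : ℕ∞) : WithTop ℕ∞) (deriv g) := (contDiff_infty_iff_deriv.mp (hg.of_le (by simp))).2
  have hh' : ContDiff ℝ ((⊤ : ℕ∞) : WithTop ℕ∞) (deriv h) := (contDiff_infty_iff_deriv.mp (hh.of_le (by simp))).2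
  have hgd : Differentiable ℝ g := hg.differentiable (by simp)
  have hhd : Differentiable ℝ h := hh.differentiable (by simp)
  have hg'd : Differentiable ℝ (deriv g) := hg'.differentiable (by simp)
  have hh'd : Differentiable ℝ (deriv h) := hh'.differentiable (by simp)
  set c := 2 * H₀ / (1 + d₁ ^ 2) with hc
  set Q : ℝ → ℝ := fun t => (deriv h t - a) / (deriv g t - d₁) with hQ
  have hQd : Differentiable ℝ Q :=
    Differentiable.div (hh'd.sub_const a) (hg'd.sub_const d₁) hreg
  set u : ℝ → ℝ := fun y => g y - d₁ * y with hu
  have hud : Differentiable ℝ u := hgd.sub (differentiable_id.const_mul d₁)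
  have huHas : ∀ y, HasDerivAt u (deriv g y - d₁) y := by
    intro y
    have H := (hgd y).hasDerivAt.sub ((hasDerivAt_id y).const_mul d₁)
    simpa [Pi.sub_def] using H
  have hu' : ∀ y, deriv u y = deriv g y - d₁ := fun y => (huHas y).deriv
  -- first integration
  have hFd : Differentiable ℝ (fun y => Q y - c * u y) := hQd.sub (hud.const_mul c)
  have hF0 : ∀ y, deriv (fun y => Q y - c * u y) y = 0 := by
    intro y
    rw [deriv_fun_sub (hQd y) ((hud.const_mul c) y), deriv_const_mul c (hud y), hu' y,
      ← hODE y]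
    ring
  have hconst1 : ∀ y, Q y - c * u y = Q 0 - c * u 0 := fun y =>
    is_const_of_deriv_eq_zero hFd hF0 y 0
  set d₃ := Q 0 - c * u 0 with hd₃
  have hQeq : ∀ y, deriv h y - a = (c * u y + d₃) * (deriv g y - d₁) := by
    intro y
    have hq : Q y = c * u y + d₃ := by linarith [hconst1 y]
    rw [hQ] at hq
    exact (div_eq_iff (hreg y)).mp hq
  -- second integration
  set G : ℝ → ℝ := fun y => h y - c / 2 * u y ^ 2 - a * y - d₃ * u y with hG
  have hGd : Differentiable ℝ G :=
    ((hhd.sub (((hud.pow 2)).const_mul (c / 2))).sub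
      (differentiable_id.const_mul a)).sub (hud.const_mul d₃)
  have hG0 : ∀ y, deriv G y = 0 := by
    intro y
    have H := (((hhd y).hasDerivAt.sub (((huHas y).pow 2).const_mul (c / 2))).sub
      ((hasDerivAt_id y).const_mul a)).sub ((huHas y).const_mul d₃)
    have hGd' : deriv G y
        = deriv h y - c / 2 * ((2 : ℕ) * u y ^ (2 - 1) * (deriv g y - d₁))
          - a * 1 - d₃ * (deriv g y - d₁) := H.deriv
    rw [hGd']
    push_cast
    linear_combination hQeq y
  have hconst2 : ∀ y, G y = G 0 := fun y => is_const_of_deriv_eq_zero hGd hG0 y 0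
  refine ⟨d₃, G 0, fun y => ?_⟩
  have h1 : h y - c / 2 * (g y - d₁ * y) ^ 2 - a * y - d₃ * (g y - d₁ * y) = G 0 :=
    hconst2 y
  have hc2 : c / 2 = H₀ / (1 + d₁ ^ 2) := by rw [hc]; ring
  linear_combination h1 + (g y - d₁ * y) ^ 2 * hc2
end

section
/- Let c₁ > 0, let ω, a₁₂, a₂₂ be nonzero constants and c₂, d₄ constants, and define f(u) = (1/(c₁ω²))log|cos(ωc₁a₂₂u + c₂)| and g(v) = (−1/(c₁ω²))log|cos(ωc₁a₁₂v + d₄)|, so that −f''/(a₂₂² + (ωf')²) = c₁ and g''/(a₁₂² + (ωg')²) = c₁. Then on intervals where the cosines are nonzero, [a₁₂² + (ωg'(v))²]·f''(u) + [a₂₂² + (ωf'(u))²]·g''(v) = 0 for all u, v, i.e., the corresponding translation surface of Type I.3 is isotropic minimal. -/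
open Real

lemma aux_hd1 (C k θ₀ u : ℝ) (h : Real.cos (k * u + θ₀) ≠ 0) :
    HasDerivAt (fun u => C * Real.log |Real.cos (k * u + θ₀)|)
      (-C * k * Real.tan (k * u + θ₀)) u := by
  have hlin : HasDerivAt (fun u : ℝ => k * u + θ₀) k u := by
    simpa using ((hasDerivAt_id u).const_mul k).add_const θ₀
  have hcos : HasDerivAt (fun u : ℝ => Real.cos (k * u + θ₀))
      (-Real.sin (k * u + θ₀) * k) u := (Real.hasDerivAt_cos _).comp u hlin
  have hlog := (Real.hasDerivAt_log h).comp u hcos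
  have := hlog.const_mul C
  simp only [Real.log_abs]
  refine this.congr_deriv ?_
  rw [Real.tan_eq_sin_div_cos, div_eq_mul_inv]
  ring

lemma aux_hd2 (C k θ₀ u : ℝ) (h : Real.cos (k * u + θ₀) ≠ 0) :
    HasDerivAt (fun u => -C * k * Real.tan (k * u + θ₀))
      (-C * k ^ 2 / Real.cos (k * u + θ₀) ^ 2) u := by
  have hlin : HasDerivAt (fun u : ℝ => k * u + θ₀) k u := by
    simpa using ((hasDerivAt_id u).const_mul k).add_const θ₀
  have htan := (Real.hasDerivAt_tan h).comp u hlin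
  have := htan.const_mul (-C * k)
  refine this.congr_deriv ?_
  field_simp

lemma aux_derivs (C k θ₀ u : ℝ) (h : Real.cos (k * u + θ₀) ≠ 0) :
    deriv (fun u => C * Real.log |Real.cos (k * u + θ₀)|) u
        = -C * k * Real.tan (k * u + θ₀) ∧
    deriv (deriv (fun u => C * Real.log |Real.cos (k * u + θ₀)|)) u
        = -C * k ^ 2 / Real.cos (k * u + θ₀) ^ 2 := by
  have hopen : IsOpen {x : ℝ | Real.cos (k * x + θ₀) ≠ 0} := by
    have : Continuous fun x : ℝ => Real.cos (k * x + θ₀) := by continuity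
    exact isOpen_ne.preimage this
  have hev : ∀ᶠ x in nhds u, x ∈ {x : ℝ | Real.cos (k * x + θ₀) ≠ 0} :=
    hopen.mem_nhds h
  have h1 : deriv (fun u => C * Real.log |Real.cos (k * u + θ₀)|) =ᶠ[nhds u]
      fun x => -C * k * Real.tan (k * x + θ₀) := by
    filter_upwards [hev] with x hx
    exact (aux_hd1 C k θ₀ x hx).deriv
  refine ⟨(aux_hd1 C k θ₀ u h).deriv, ?_⟩
  rw [h1.deriv_eq]
  exact (aux_hd2 C k θ₀ u h).deriv

/-- The pair `f(u) = (1/(c₁ω²))log|cos(ωc₁a₂₂u + c₂)|`,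
`g(v) = (−1/(c₁ω²))log|cos(ωc₁a₁₂v + d₄)|` satisfies the isotropic minimality
equation of affine translation surfaces of second kind wherever the cosines
are nonzero. -/
theorem stmt19 (c₁ c₂ d₄ ω a₁₂ a₂₂ : ℝ)
    (hc₁ : 0 < c₁) (hω : ω ≠ 0) (ha₁₂ : a₁₂ ≠ 0) (ha₂₂ : a₂₂ ≠ 0)
    (f g : ℝ → ℝ)
    (hfdef : f = fun u => 1 / (c₁ * ω ^ 2)
      * Real.log |Real.cos (ω * c₁ * a₂₂ * u + c₂)|)
    (hgdef : g = fun v => -1 / (c₁ * ω ^ 2)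
      * Real.log |Real.cos (ω * c₁ * a₁₂ * v + d₄)|) :
    ∀ u v : ℝ, Real.cos (ω * c₁ * a₂₂ * u + c₂) ≠ 0 →
      Real.cos (ω * c₁ * a₁₂ * v + d₄) ≠ 0 →
      (a₁₂ ^ 2 + (ω * deriv g v) ^ 2) * deriv (deriv f) u
        + (a₂₂ ^ 2 + (ω * deriv f u) ^ 2) * deriv (deriv g) v = 0 := by
  intro u v hu hv
  subst hfdef hgdef
  obtain ⟨hf1, hf2⟩ := aux_derivs (1 / (c₁ * ω ^ 2)) (ω * c₁ * a₂₂) c₂ u hu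
  obtain ⟨hg1, hg2⟩ := aux_derivs (-1 / (c₁ * ω ^ 2)) (ω * c₁ * a₁₂) d₄ v hv
  have hc₁' : c₁ ≠ 0 := ne_of_gt hc₁
  have hpu : Real.sin (ω * c₁ * a₂₂ * u + c₂) ^ 2 = 1 - Real.cos (ω * c₁ * a₂₂ * u + c₂) ^ 2 := by
    have := Real.sin_sq_add_cos_sq (ω * c₁ * a₂₂ * u + c₂); linarith
  have hpv : Real.sin (ω * c₁ * a₁₂ * v + d₄) ^ 2 = 1 - Real.cos (ω * c₁ * a₁₂ * v + d₄) ^ 2 := by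
    have := Real.sin_sq_add_cos_sq (ω * c₁ * a₁₂ * v + d₄); linarith
  rw [hf1, hf2, hg1, hg2, Real.tan_eq_sin_div_cos, Real.tan_eq_sin_div_cos]
  have e1 : (ω * (-(-1 / (c₁ * ω ^ 2)) * (ω * c₁ * a₁₂) *
      (Real.sin (ω * c₁ * a₁₂ * v + d₄) / Real.cos (ω * c₁ * a₁₂ * v + d₄)))) ^ 2
      = a₁₂ ^ 2 * (1 - Real.cos (ω * c₁ * a₁₂ * v + d₄) ^ 2)
        / Real.cos (ω * c₁ * a₁₂ * v + d₄) ^ 2 := by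
    rw [← hpv]; field_simp
  have e2 : (ω * (-(1 / (c₁ * ω ^ 2)) * (ω * c₁ * a₂₂) *
      (Real.sin (ω * c₁ * a₂₂ * u + c₂) / Real.cos (ω * c₁ * a₂₂ * u + c₂)))) ^ 2
      = a₂₂ ^ 2 * (1 - Real.cos (ω * c₁ * a₂₂ * u + c₂) ^ 2)
        / Real.cos (ω * c₁ * a₂₂ * u + c₂) ^ 2 := by
    rw [← hpu]; field_simp
  rw [e1, e2]
  generalize Real.cos (ω * c₁ * a₁₂ * v + d₄) = Cv at hv ⊢
  generalize Real.cos (ω * c₁ * a₂₂ * u + c₂) = Cu at hu ⊢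
  field_simp
  ring
end
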